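/- For every m ≥ 0 and every k with 0 < k < p, the polynomial identity P_{pm+k}^p(t) = (1/p) · t^{m·Δ_{p−2} + Δ_{k−1}} · (Σ_{j=0}^{p−k−1} t^{jk}) · P_m^p(t) + (1/p) · t^{m·Δ_{p−2} + Δ_{k−2}} · (Σ_{j=0}^{k−1} t^{j(p−k)}) · P_{m+1}^p(t) holds. -/

import Mathlib

/-!
Under `λ` the first digit is uniform on `{0, …, p-1}` and independent of the tail, which again
has law `λ`. Run the odometer `n` steps from `cons a y`: the first digit cycles through
`a, a+1, …` modulo `p`, and `φ` reads it except when it equals `p - 1`; each time it wraps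
around, the odometer advances the tail `y` by one step. Hence
`φ^(n)(cons a y) = ∑_{j<n} w(a+j) + φ^(⌊(n+a)/p⌋)(y)`, where `w(j) = j mod p` unless that residue
is `p - 1`, in which case `w(j) = 0`, and taking expectations of `t^φ^(n)` gives
`P_n(t) = p⁻¹ ∑_a t^{∑_{j<n} w(a+j)} P_{⌊(n+a)/p⌋}(t)`. For `n = pm + k` each full period of the
first digit contributes `Δ_{p-2}`; the digits `a < p - k` never carry into the tail, the digits
`a = p - k + i` carry exactly once, and summing the remaining weights gives the two terms.
-/

open MeasureTheory
open scoped NNReal ENNReal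

namespace Chacon

/-- The space of digit sequences with digits in `{0, …, p-1}`. -/
def Gamma (p : ℕ) : Set (ℕ → ℕ) := {x | ∀ i, x i < p}

/-- `Γ*`: sequences with digits `< p` having infinitely many coordinates `≠ p - 1`. -/
def GammaStar (p : ℕ) : Set (ℕ → ℕ) :=
  {x | (∀ i, x i < p) ∧ {i | x i ≠ p - 1}.Infinite}

/-- The least index `i` with `x i ≠ p - 1`. -/
noncomputable def firstNot (p : ℕ) (x : ℕ → ℕ) : ℕ :=
  sInf {i | x i ≠ p - 1}

/-- `φ(x) = x_i` where `i` is the least index with `x_i ≠ p - 1`. -/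
noncomputable def phi (p : ℕ) (x : ℕ → ℕ) : ℕ :=
  x (firstNot p x)

/-- The odometer `S` (addition of `1` with carry): the initial run of digits
`p - 1` is replaced by zeros, and the first digit `≠ p - 1` is increased by one. -/
noncomputable def odo (p : ℕ) (x : ℕ → ℕ) : ℕ → ℕ :=
  fun i =>
    if i < firstNot p x then 0
    else if i = firstNot p x then x i + 1
    else x i

/-- `φ^(m)(x) = ∑_{j=0}^{m-1} φ(S^j x)`. -/
noncomputable def phiSum (p m : ℕ) (x : ℕ → ℕ) : ℕ :=
  ∑ j ∈ Finset.range m, phi p ((odo p)^[j] x)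

/-- The base-`p` digit sequence of a real number `u`. -/
noncomputable def digitsOf (p : ℕ) (u : ℝ) : ℕ → ℕ :=
  fun i => (⌊u * (p : ℝ) ^ (i + 1)⌋).toNat % p

/-- `λ`: the product probability measure on digit sequences under which the
coordinates are i.i.d., uniformly distributed in `{0, …, p-1}`; it is realized
concretely as the distribution of the base-`p` digit sequence of a uniformly
distributed random point of `[0,1)`. -/
noncomputable def lam (p : ℕ) : Measure (ℕ → ℕ) :=
  Measure.map (digitsOf p) (volume.restrict (Set.Ico (0 : ℝ) 1))

/-- `π_m(j) = λ({x : φ^(m)(x) = j})`. -/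
noncomputable def pim (p m j : ℕ) : ℝ≥0∞ :=
  lam p {x | phiSum p m x = j}

/-- `P_m^p(t) = ∑_{j ≥ 0} π_m(j) t^j`, a real polynomial
(the sum is over `0 ≤ j ≤ m (p-2)` since `0 ≤ φ^(m) ≤ m (p-2)` a.s.). -/
noncomputable def P (p m : ℕ) (t : ℝ) : ℝ :=
  ∑ j ∈ Finset.range (m * (p - 2) + 1), (pim p m j).toReal * t ^ j

/-- The `n`-th triangular number `Δ_n = n (n+1) / 2`. -/
def tri (n : ℕ) : ℕ := n * (n + 1) / 2

/-- The degree `D_m` of `P_m^p`: the largest `j` with `π_m(j) ≠ 0`. -/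
noncomputable def D (p m : ℕ) : ℕ := sSup {j | pim p m j ≠ 0}

/-- The lower degree `d_m` of `P_m^p`: the least `j` with `π_m(j) ≠ 0`. -/
noncomputable def d (p m : ℕ) : ℕ := sInf {j | pim p m j ≠ 0}

def cons (a : ℕ) (y : ℕ → ℕ) : ℕ → ℕ
  | 0 => a
  | i + 1 => y i

@[simp] lemma cons_zero (a : ℕ) (y : ℕ → ℕ) : cons a y 0 = a := rfl

@[simp] lemma cons_succ (a : ℕ) (y : ℕ → ℕ) (i : ℕ) : cons a y (i + 1) = y i := rfl

lemma measurable_cons (a : ℕ) : Measurable (cons a) :=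
  measurable_pi_lambda _ fun i => by cases i <;> simp [cons, measurable_pi_apply]

section Odometer

variable {p : ℕ} {x y : ℕ → ℕ}

lemma apply_firstNot_ne (h : ∃ i, x i ≠ p - 1) : x (firstNot p x) ≠ p - 1 :=
  Nat.sInf_mem (s := {i | x i ≠ p - 1}) h

lemma apply_eq_of_lt_firstNot {i : ℕ} (hi : i < firstNot p x) : x i = p - 1 :=
  not_not.1 (Nat.notMem_of_lt_sInf hi)

lemma firstNot_eq_iff (h : ∃ i, x i ≠ p - 1) {n : ℕ} :
    firstNot p x = n ↔ x n ≠ p - 1 ∧ ∀ i < n, x i = p - 1 := by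
  constructor
  · rintro rfl
    exact ⟨apply_firstNot_ne h, fun i => apply_eq_of_lt_firstNot⟩
  · rintro ⟨hn, hlt⟩
    exact le_antisymm (Nat.sInf_le hn) (not_lt.1 fun h' => apply_firstNot_ne h (hlt _ h'))

lemma firstNot_of_forall_eq (h : ∀ i, x i = p - 1) : firstNot p x = 0 := by
  simp [firstNot, h]

lemma measurableSet_apply_eq (i c : ℕ) : MeasurableSet {x : ℕ → ℕ | x i = c} :=
  measurableSet_eq_fun (measurable_pi_apply i) measurable_const

lemma measurable_firstNot (p : ℕ) : Measurable (firstNot p) := by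
  refine measurable_to_countable' fun n => ?_
  have : firstNot p ⁻¹' {n} = ({x | x n = p - 1}ᶜ ∩ ⋂ i < n, {x | x i = p - 1}) ∪
      ({_x | n = 0} ∩ ⋂ i, {x | x i = p - 1}) := by
    ext x
    by_cases h : ∃ i, x i ≠ p - 1
    · have : ¬ ∀ i, x i = p - 1 := by simpa using h
      simp [firstNot_eq_iff h, this]
    · push Not at h
      simp [firstNot_of_forall_eq h, h, eq_comm]
  rw [this]
  exact ((measurableSet_apply_eq n _).compl.inter
      (.iInter fun i => .iInter fun (_ : i < n) => measurableSet_apply_eq i _)).union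
    ((MeasurableSet.const _).inter (.iInter fun i => measurableSet_apply_eq i _))

lemma firstNot_cons_of_ne {a : ℕ} (y : ℕ → ℕ) (h : a ≠ p - 1) : firstNot p (cons a y) = 0 :=
  Nat.sInf_eq_zero.mpr (Or.inl h)

lemma firstNot_cons_sub_one (h : ∃ i, y i ≠ p - 1) :
    firstNot p (cons (p - 1) y) = firstNot p y + 1 := by
  refine (firstNot_eq_iff (x := cons (p - 1) y) ⟨firstNot p y + 1, apply_firstNot_ne h⟩).2
    ⟨apply_firstNot_ne h, fun i hi => ?_⟩
  cases i with
  | zero => rfl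
  | succ i => exact apply_eq_of_lt_firstNot (x := y) (by omega)

lemma phi_cons_of_ne {a : ℕ} (y : ℕ → ℕ) (h : a ≠ p - 1) : phi p (cons a y) = a := by
  simp [phi, firstNot_cons_of_ne y h]

lemma odo_cons_of_ne {a : ℕ} (y : ℕ → ℕ) (h : a ≠ p - 1) : odo p (cons a y) = cons (a + 1) y := by
  funext i
  cases i <;> simp [odo, firstNot_cons_of_ne y h]

lemma phi_cons_sub_one (h : ∃ i, y i ≠ p - 1) : phi p (cons (p - 1) y) = phi p y := by
  simp [phi, firstNot_cons_sub_one h]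

lemma odo_cons_sub_one (h : ∃ i, y i ≠ p - 1) : odo p (cons (p - 1) y) = cons 0 (odo p y) := by
  funext i
  cases i <;> simp [odo, firstNot_cons_sub_one h]

end Odometer

section PhiSum

variable {p : ℕ} {x y : ℕ → ℕ}

lemma measurable_phi (p : ℕ) : Measurable (phi p) := by
  change Measurable ((fun q : (ℕ → ℕ) × ℕ => q.1 q.2) ∘ fun x => (x, firstNot p x))
  exact (measurable_from_prod_countable_left fun n => measurable_pi_apply n).comp
    (measurable_id.prodMk (measurable_firstNot p))

lemma measurable_odo (p : ℕ) : Measurable (odo p) :=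
  measurable_pi_lambda _ fun i =>
    (measurable_of_countable fun q : ℕ × ℕ =>
        if i < q.1 then 0 else if i = q.1 then q.2 + 1 else q.2).comp
      ((measurable_firstNot p).prodMk (measurable_pi_apply i))

lemma measurable_phiSum (p n : ℕ) : Measurable (phiSum p n) :=
  Finset.measurable_sum _ fun j _ => (measurable_phi p).comp ((measurable_odo p).iterate j)

lemma phiSum_succ (p n : ℕ) (x : ℕ → ℕ) :
    phiSum p (n + 1) x = phi p x + phiSum p n (odo p x) := by
  rw [phiSum, Finset.sum_range_succ', add_comm]
  rfl

lemma odo_apply_of_firstNot_lt {i : ℕ} (h : firstNot p x < i) : odo p x i = x i := by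
  simp [odo, h.not_gt, h.ne']

lemma infinite_odo (hx : {i | x i ≠ p - 1}.Infinite) : {i | odo p x i ≠ p - 1}.Infinite :=
  (hx.sdiff (Set.finite_Iic (firstNot p x))).mono fun i hi => by
    simpa [odo_apply_of_firstNot_lt (not_le.1 hi.2)] using hi.1

lemma odo_mem_gammaStar (hx : x ∈ GammaStar p) : odo p x ∈ GammaStar p := by
  refine ⟨fun i => ?_, infinite_odo hx.2⟩
  have hfirst := apply_firstNot_ne hx.2.nonempty
  have hfirst_lt := hx.1 (firstNot p x)
  unfold odo
  split_ifs with hlt heq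
  · omega
  · subst heq
    omega
  · exact hx.1 i

lemma iterate_odo_mem_gammaStar (hx : x ∈ GammaStar p) (n : ℕ) : (odo p)^[n] x ∈ GammaStar p := by
  induction n with
  | zero => exact hx
  | succ n ih => rw [Function.iterate_succ_apply']; exact odo_mem_gammaStar ih

lemma phi_le (hx : x ∈ GammaStar p) : phi p x ≤ p - 2 := by
  have hfirst := apply_firstNot_ne hx.2.nonempty
  have hfirst_lt := hx.1 (firstNot p x)
  unfold phi
  omega

lemma phiSum_le (hx : x ∈ GammaStar p) (n : ℕ) : phiSum p n x ≤ n * (p - 2) :=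
  (Finset.sum_le_card_nsmul _ _ _ fun j _ => phi_le (iterate_odo_mem_gammaStar hx j)).trans
    (by simp)

-- What `φ` reads off a first digit equal to `j mod p`: at `p - 1` it reads the tail instead.
def digitWeight (p j : ℕ) : ℕ := if j % p = p - 1 then 0 else j % p

lemma digitWeight_add_self (p j : ℕ) : digitWeight p (p + j) = digitWeight p j := by
  simp [digitWeight]

lemma digitWeight_of_lt {j : ℕ} (hj : j < p - 1) : digitWeight p j = j := by
  simp [digitWeight, Nat.mod_eq_of_lt (by omega : j < p), hj.ne]

lemma digitWeight_sub_one (p : ℕ) : digitWeight p (p - 1) = 0 := by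
  rcases p.eq_zero_or_pos with rfl | hp
  · rfl
  · simp [digitWeight, Nat.mod_eq_of_lt (Nat.sub_lt hp one_pos)]

lemma phiSum_cons (hy : {i | y i ≠ p - 1}.Infinite) {a : ℕ} (ha : a < p) (n : ℕ) :
    phiSum p n (cons a y) =
      ∑ j ∈ Finset.range n, digitWeight p (a + j) + phiSum p ((n + a) / p) y := by
  induction n generalizing a y with
  | zero => simp [phiSum, Nat.div_eq_of_lt ha]
  | succ n ih =>
    rw [phiSum_succ, Finset.sum_range_succ']
    by_cases hcarry : a = p - 1
    · subst hcarry
      have hy' : ∃ i, y i ≠ p - 1 := hy.nonempty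
      have hdiv : (n + 1 + (p - 1)) / p = n / p + 1 := by
        rw [show n + 1 + (p - 1) = n + 1 * p by omega, Nat.add_mul_div_right _ _ (by omega)]
      rw [phi_cons_sub_one hy', odo_cons_sub_one hy', ih (infinite_odo hy) (by omega), hdiv,
        phiSum_succ]
      have hshift (j : ℕ) : digitWeight p (p - 1 + (j + 1)) = digitWeight p j := by
        rw [show p - 1 + (j + 1) = p + j by omega, digitWeight_add_self]
      simp only [hshift, Nat.add_zero, digitWeight_sub_one, zero_add]
      ring
    · rw [phi_cons_of_ne y hcarry, odo_cons_of_ne y hcarry, ih hy (by omega),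
        add_zero, digitWeight_of_lt (by omega), show n + (a + 1) = n + 1 + a by ring]
      simp only [add_assoc, add_comm 1]
      ring

end PhiSum

section Digits

variable {p : ℕ}

lemma digitsOf_lt (hp : 0 < p) (u : ℝ) (i : ℕ) : digitsOf p u i < p :=
  Nat.mod_lt _ hp

lemma measurable_digitsOf (p : ℕ) : Measurable (digitsOf p) :=
  measurable_pi_lambda _ fun _ =>
    (measurable_of_countable fun z : ℤ => z.toNat % p).comp
      (Measurable.floor (measurable_id.mul_const _))

lemma floor_add_one_eq_mul_of_digitsOf_eq (hp : 0 < p) {u : ℝ} (hu : 0 ≤ u) (i : ℕ)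
    (h : digitsOf p u (i + 1) = p - 1) :
    ⌊u * (p : ℝ) ^ (i + 1 + 1)⌋ + 1 = p * (⌊u * (p : ℝ) ^ (i + 1)⌋ + 1) := by
  set y := u * (p : ℝ) ^ (i + 1)
  have hy : u * (p : ℝ) ^ (i + 1 + 1) = p * y := by ring
  have hp' : (0 : ℝ) < p := by exact_mod_cast hp
  have hlow : p * ⌊y⌋ ≤ ⌊(p : ℝ) * y⌋ :=
    Int.le_floor.2 (by push_cast; exact mul_le_mul_of_nonneg_left (Int.floor_le y) hp'.le)
  have hhigh : ⌊(p : ℝ) * y⌋ < p * ⌊y⌋ + p := Int.floor_lt.2 (by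
    push_cast
    nlinarith [Int.lt_floor_add_one y])
  obtain ⟨b, hb⟩ : ∃ b : ℕ, ⌊y⌋ = b :=
    ⟨⌊y⌋.toNat, (Int.toNat_of_nonneg (Int.floor_nonneg.2 (by positivity))).symm⟩
  rw [hb] at hlow hhigh
  obtain ⟨r, hr⟩ : ∃ r : ℕ, ⌊(p : ℝ) * y⌋ = p * b + r :=
    ⟨(⌊(p : ℝ) * y⌋ - p * b).toNat, by omega⟩
  have hrp : r < p := by omega
  simp only [digitsOf, hy, hr] at h
  rw [show ((p : ℤ) * b + r).toNat = p * b + r by omega, Nat.mul_add_mod,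
    Nat.mod_eq_of_lt hrp] at h
  rw [hy, hr, hb, h]
  push_cast [Nat.one_le_iff_ne_zero.2 hp.ne']
  ring

lemma digitsOf_mem_gammaStar (hp : 2 ≤ p) {u : ℝ} (hu : 0 ≤ u) : digitsOf p u ∈ GammaStar p := by
  refine ⟨digitsOf_lt (by omega) u, fun hfin => ?_⟩
  obtain ⟨N, hN⟩ := hfin.bddAbove
  -- If all digits after `N` were `p - 1`, the gap `g j ∈ (0, 1]` below would grow like `p ^ j`.
  have hdigit (j : ℕ) : digitsOf p u (N + j + 1) = p - 1 := by
    by_contra h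
    have := hN (show N + j + 1 ∈ {i | digitsOf p u i ≠ p - 1} from h)
    omega
  set g : ℕ → ℝ := fun j => ⌊u * (p : ℝ) ^ (N + j + 1)⌋ + 1 - u * (p : ℝ) ^ (N + j + 1)
  have hg (j : ℕ) : g j = p ^ j * g 0 := by
    induction j with
    | zero => simp
    | succ j ih =>
      have := congrArg (fun z : ℤ => (z : ℝ))
        (floor_add_one_eq_mul_of_digitsOf_eq (by omega) hu (N + j) (hdigit j))
      push_cast at this
      calc g (j + 1) = p * g j := by
            simp only [g, show N + (j + 1) + 1 = N + j + 1 + 1 by ring, this]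
            ring
        _ = p ^ (j + 1) * g 0 := by rw [ih]; ring
  have hg0 : 0 < g 0 := by
    simp only [g]
    linarith [Int.lt_floor_add_one (u * (p : ℝ) ^ (N + 0 + 1))]
  obtain ⟨n, hn⟩ := pow_unbounded_of_one_lt (g 0)⁻¹ (by exact_mod_cast hp : (1 : ℝ) < p)
  have hgn : g n ≤ 1 := by
    simp only [g]
    linarith [Int.floor_le (u * (p : ℝ) ^ (N + n + 1))]
  have := mul_lt_mul_of_pos_right hn hg0
  rw [inv_mul_cancel₀ hg0.ne', ← hg] at this
  linarith

end Digits

section SelfSimilarity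

variable {p : ℕ}

lemma lam_apply {s : Set (ℕ → ℕ)} (hs : MeasurableSet s) :
    lam p s = volume (digitsOf p ⁻¹' s ∩ Set.Ico 0 1) := by
  rw [lam, Measure.map_apply (measurable_digitsOf p) hs,
    Measure.restrict_apply (measurable_digitsOf p hs)]

lemma measurableSet_gammaStar (p : ℕ) : MeasurableSet (GammaStar p) := by
  have : GammaStar p = (⋂ i, {x | x i < p}) ∩ ⋂ N, ⋃ i ≥ N, {x | x i = p - 1}ᶜ := by
    ext x
    simp [GammaStar, ← Nat.frequently_atTop_iff_infinite, Filter.frequently_atTop]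
  rw [this]
  exact (MeasurableSet.iInter fun i =>
      measurableSet_lt (measurable_pi_apply i) measurable_const).inter
    (.iInter fun N => .iUnion fun i => .iUnion fun (_ : i ≥ N) =>
      (measurableSet_apply_eq i _).compl)

lemma ae_mem_gammaStar (hp : 2 ≤ p) : ∀ᵐ x ∂lam p, x ∈ GammaStar p :=
  (ae_map_iff (p := (· ∈ GammaStar p)) (measurable_digitsOf p).aemeasurable
    (measurableSet_gammaStar p)).2 <|
      ae_restrict_of_forall_mem measurableSet_Ico fun _ hu => digitsOf_mem_gammaStar hp hu.1

lemma mem_Ico_and_digitsOf_zero_iff {a : ℕ} (ha : a < p) {u : ℝ} :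
    u ∈ Set.Ico 0 1 ∧ digitsOf p u 0 = a ↔ p * u - a ∈ Set.Ico 0 1 := by
  have hp : (0 : ℝ) < p := by exact_mod_cast (a.zero_le.trans_lt ha)
  have hfloor : p * u - a ∈ Set.Ico 0 1 ↔ ⌊u * (p : ℝ) ^ (0 + 1)⌋ = a := by
    rw [Int.floor_eq_iff, Set.mem_Ico]
    push_cast
    constructor <;> rintro ⟨h0, h1⟩ <;> constructor <;> linarith
  rw [hfloor, digitsOf]
  constructor
  · rintro ⟨⟨h0, h1⟩, hd⟩
    have hz0 : 0 ≤ ⌊u * (p : ℝ) ^ (0 + 1)⌋ := Int.floor_nonneg.2 (by positivity)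
    have hzp : ⌊u * (p : ℝ) ^ (0 + 1)⌋ < p := Int.floor_lt.2 (by push_cast; nlinarith)
    rw [Nat.mod_eq_of_lt (by omega)] at hd
    omega
  · intro hz
    rw [hz, Int.toNat_natCast, Nat.mod_eq_of_lt ha]
    obtain ⟨h0, h1⟩ := (Int.floor_eq_iff.1 hz)
    have : (a : ℝ) + 1 ≤ p := by exact_mod_cast ha
    push_cast at h0 h1
    exact ⟨⟨by nlinarith, by nlinarith⟩, rfl⟩

lemma digitsOf_eq_cons {a : ℕ} (ha : a < p) {u : ℝ} (hu : p * u - a ∈ Set.Ico 0 1) :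
    digitsOf p u = cons a (digitsOf p (p * u - a)) := by
  funext i
  cases i with
  | zero => exact ((mem_Ico_and_digitsOf_zero_iff ha).2 hu).2
  | succ i =>
    have hshift : (p * u - a) * (p : ℝ) ^ (i + 1) =
        u * (p : ℝ) ^ (i + 1 + 1) - ((a * p ^ i * p : ℕ) : ℝ) := by
      push_cast; ring
    have hle : ((a * p ^ i * p : ℕ) : ℤ) ≤ ⌊u * (p : ℝ) ^ (i + 1 + 1)⌋ := Int.le_floor.2 (by
      have : (0 : ℝ) ≤ (p * u - a) * (p : ℝ) ^ (i + 1) := mul_nonneg hu.1 (by positivity)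
      rw [hshift] at this
      push_cast at this ⊢
      linarith)
    obtain ⟨n, hn⟩ : ∃ n : ℕ, ⌊u * (p : ℝ) ^ (i + 1 + 1)⌋ = n :=
      ⟨_, (Int.toNat_of_nonneg ((Int.natCast_nonneg _).trans hle)).symm⟩
    rw [hn, Nat.cast_le] at hle
    simp only [cons_succ, digitsOf, hshift, Int.floor_sub_natCast, hn]
    rw [← Nat.cast_sub hle, Int.toNat_natCast, Int.toNat_natCast, mul_comm _ p,
      Nat.sub_mul_mod (by rwa [mul_comm])]

lemma volume_preimage_mul_sub {c : ℝ} (hc : 0 < c) (b : ℝ) (s : Set ℝ) :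
    volume ((fun u => c * u - b) ⁻¹' s) = ENNReal.ofReal c⁻¹ * volume s := by
  change volume ((fun u => c * u) ⁻¹' ((fun v => v + -b) ⁻¹' s)) = _
  rw [Real.volume_preimage_mul_left hc.ne', measure_preimage_add_right, abs_of_pos (inv_pos.2 hc)]

lemma lam_inter_apply_zero_eq {a : ℕ} (ha : a < p) {s : Set (ℕ → ℕ)} (hs : MeasurableSet s) :
    lam p (s ∩ {x | x 0 = a}) = (p : ℝ≥0∞)⁻¹ * lam p (cons a ⁻¹' s) := by
  have hpre : digitsOf p ⁻¹' (s ∩ {x | x 0 = a}) ∩ Set.Ico 0 1 =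
      (fun u : ℝ => p * u - a) ⁻¹' (digitsOf p ⁻¹' (cons a ⁻¹' s) ∩ Set.Ico 0 1) := by
    ext u
    simp only [Set.mem_inter_iff, Set.mem_preimage]
    constructor
    · rintro ⟨⟨hs, h0⟩, hu⟩
      have hmem := (mem_Ico_and_digitsOf_zero_iff ha).1 ⟨hu, h0⟩
      exact ⟨digitsOf_eq_cons ha hmem ▸ hs, hmem⟩
    · rintro ⟨hs, hmem⟩
      obtain ⟨hu, h0⟩ := (mem_Ico_and_digitsOf_zero_iff ha).2 hmem
      exact ⟨⟨(digitsOf_eq_cons ha hmem).symm ▸ hs, h0⟩, hu⟩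
  have hp : (0 : ℝ) < p := by exact_mod_cast (a.zero_le.trans_lt ha)
  rw [lam_apply (hs.inter (measurableSet_apply_eq 0 a)), lam_apply (measurable_cons a hs), hpre,
    volume_preimage_mul_sub hp, ENNReal.ofReal_inv_of_pos hp, ENNReal.ofReal_natCast]

lemma lam_eq_sum_map_cons (hp : 0 < p) :
    lam p = ∑ a ∈ Finset.range p, (p : ℝ≥0∞)⁻¹ • (lam p).map (cons a) := by
  ext s hs
  have hsplit : digitsOf p ⁻¹' s = digitsOf p ⁻¹' ⋃ a ∈ Finset.range p, s ∩ {x | x 0 = a} := by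
    ext u
    simp [digitsOf_lt hp u 0]
  have hmeas (a : ℕ) (_ : a ∈ Finset.range p) : MeasurableSet (s ∩ {x | x 0 = a}) :=
    hs.inter (measurableSet_apply_eq 0 a)
  have hdisj : (Finset.range p : Set ℕ).PairwiseDisjoint fun a => s ∩ {x | x 0 = a} :=
    fun a _ b _ hab => Disjoint.mono Set.inter_subset_right Set.inter_subset_right
      (Set.disjoint_left.2 fun x h1 h2 => hab (h1.symm.trans h2))
  rw [Measure.coe_finsetSum, Finset.sum_apply, lam_apply hs, hsplit,
    ← lam_apply (Finset.measurableSet_biUnion _ hmeas), measure_biUnion_finset hdisj hmeas]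
  refine Finset.sum_congr rfl fun a ha => ?_
  rw [lam_inter_apply_zero_eq (Finset.mem_range.1 ha) hs, Measure.smul_apply,
    Measure.map_apply (measurable_cons a) hs, smul_eq_mul]

lemma integral_lam_eq_sum_cons (hp : 0 < p) {f : (ℕ → ℕ) → ℝ} (hfm : Measurable f)
    (hf : Integrable f (lam p)) :
    ∫ x, f x ∂lam p = (p : ℝ)⁻¹ * ∑ a ∈ Finset.range p, ∫ x, f (cons a x) ∂lam p := by
  have hle (a : ℕ) (ha : a ∈ Finset.range p) : (p : ℝ≥0∞)⁻¹ • (lam p).map (cons a) ≤ lam p := by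
    conv_rhs => rw [lam_eq_sum_map_cons hp]
    exact Finset.single_le_sum (f := fun a => (p : ℝ≥0∞)⁻¹ • (lam p).map (cons a))
      (fun _ _ => Measure.zero_le _) ha
  conv_lhs => rw [lam_eq_sum_map_cons hp]
  rw [integral_finsetSum_measure fun a ha => hf.mono_measure (hle a ha), Finset.mul_sum]
  refine Finset.sum_congr rfl fun a _ => ?_
  rw [integral_smul_measure, integral_map (measurable_cons a).aemeasurable
    hfm.aestronglyMeasurable, ENNReal.toReal_inv, ENNReal.toReal_natCast, smul_eq_mul]

end SelfSimilarity

section GeneratingFunction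

variable {p : ℕ}

instance isFiniteMeasure_lam (p : ℕ) : IsFiniteMeasure (lam p) := by
  rw [lam]
  infer_instance

lemma measurableSet_phiSum_eq (p n j : ℕ) : MeasurableSet {x | phiSum p n x = j} :=
  measurable_phiSum p n (measurableSet_singleton j)

lemma pow_phiSum_ae_eq (hp : 2 ≤ p) (n : ℕ) (t : ℝ) :
    (fun x => t ^ phiSum p n x) =ᵐ[lam p] fun x =>
      ∑ j ∈ Finset.range (n * (p - 2) + 1),
        {y | phiSum p n y = j}.indicator (fun _ => t ^ j) x := by
  filter_upwards [ae_mem_gammaStar hp] with x hx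
  simp only [Set.indicator_apply, Set.mem_ofPred_eq]
  rw [Finset.sum_ite_eq, if_pos (Finset.mem_range.2 (Nat.lt_succ_of_le (phiSum_le hx n)))]

lemma integrable_pow_phiSum (hp : 2 ≤ p) (n : ℕ) (t : ℝ) :
    Integrable (fun x => t ^ phiSum p n x) (lam p) :=
  (integrable_finsetSum _ fun j _ => (integrable_const _).indicator
    (measurableSet_phiSum_eq p n j)).congr (pow_phiSum_ae_eq hp n t).symm

lemma P_eq_integral (hp : 2 ≤ p) (n : ℕ) (t : ℝ) : P p n t = ∫ x, t ^ phiSum p n x ∂lam p := by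
  rw [integral_congr_ae (pow_phiSum_ae_eq hp n t), integral_finsetSum _ fun j _ =>
    (integrable_const _).indicator (measurableSet_phiSum_eq p n j), P]
  refine Finset.sum_congr rfl fun j _ => ?_
  rw [integral_indicator_const _ (measurableSet_phiSum_eq p n j), smul_eq_mul,
    pim, measureReal_def]

theorem P_eq_sum_first_digit (hp : 2 ≤ p) (n : ℕ) (t : ℝ) :
    P p n t = (p : ℝ)⁻¹ * ∑ a ∈ Finset.range p,
      t ^ (∑ j ∈ Finset.range n, digitWeight p (a + j)) * P p ((n + a) / p) t := by
  rw [P_eq_integral hp, integral_lam_eq_sum_cons (by omega)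
    (show Measurable fun x => t ^ phiSum p n x from
      (measurable_of_countable _).comp (measurable_phiSum p n)) (integrable_pow_phiSum hp n t)]
  congr 1
  refine Finset.sum_congr rfl fun a ha => ?_
  rw [P_eq_integral hp, ← integral_const_mul]
  refine integral_congr_ae ?_
  filter_upwards [ae_mem_gammaStar hp] with x hx
  rw [phiSum_cons hx.2 (Finset.mem_range.1 ha), pow_add]

end GeneratingFunction

section DigitWeightSums

variable {p : ℕ}

lemma two_mul_tri (n : ℕ) : 2 * tri n = n * (n + 1) :=
  Nat.mul_div_cancel' (Nat.even_mul_succ_self n).two_dvd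

lemma sum_range_id_eq_tri (n : ℕ) : ∑ i ∈ Finset.range n, i = tri (n - 1) := by
  rw [Finset.sum_range_id, tri]
  cases n <;> simp [mul_comm]

lemma tri_sub_two_eq {k : ℕ} (hk0 : 0 < k) (hkp : k < p) :
    tri (p - 2) = tri (p - k - 1) + tri (k - 2) + (k - 1) * (p - k) := by
  obtain ⟨q, rfl⟩ : ∃ q, p = k + q + 1 := ⟨p - k - 1, by omega⟩
  obtain ⟨s, rfl⟩ : ∃ s, k = s + 1 := ⟨k - 1, by omega⟩
  rw [show s + 1 + q + 1 - 2 = s + q by omega, show s + 1 + q + 1 - (s + 1) - 1 = q by omega,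
    show s + 1 + q + 1 - (s + 1) = q + 1 by omega, Nat.add_sub_cancel]
  rcases s with _ | s
  · simp [tri]
  · rw [show s + 1 + 1 - 2 = s by omega]
    nlinarith [two_mul_tri s, two_mul_tri q, two_mul_tri (s + 1 + q)]

lemma sum_digitWeight_period (hp : 0 < p) (a : ℕ) :
    ∑ j ∈ Finset.range p, digitWeight p (a + j) = tri (p - 2) := by
  induction a with
  | zero =>
    obtain ⟨q, rfl⟩ : ∃ q, p = q + 1 := ⟨p - 1, by omega⟩
    have hlast : digitWeight (q + 1) q = 0 := digitWeight_sub_one (q + 1)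
    simp only [zero_add]
    rw [Finset.sum_range_succ, hlast, add_zero,
      Finset.sum_congr rfl fun j hj => digitWeight_of_lt (by simp at hj; omega),
      sum_range_id_eq_tri]
    rfl
  | succ a ih =>
    have h := Finset.sum_range_succ' (fun j => digitWeight p (a + j)) p
    rw [Finset.sum_range_succ, add_comm a p, digitWeight_add_self, add_zero, add_left_inj] at h
    rw [← ih, h]
    exact Finset.sum_congr rfl fun j _ => by rw [add_right_comm, add_assoc]

lemma sum_digitWeight_mul_add (hp : 0 < p) (a m k : ℕ) :
    ∑ j ∈ Finset.range (p * m + k), digitWeight p (a + j) =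
      m * tri (p - 2) + ∑ j ∈ Finset.range k, digitWeight p (a + j) := by
  induction m with
  | zero => simp
  | succ m ih =>
    rw [show p * (m + 1) + k = p + (p * m + k) by ring, Finset.sum_range_add,
      sum_digitWeight_period hp]
    simp only [show ∀ j, a + (p + j) = p + (a + j) by intro j; ring, digitWeight_add_self, ih]
    ring

lemma sum_digitWeight_of_add_lt {a k : ℕ} (h : a + k < p) :
    ∑ j ∈ Finset.range k, digitWeight p (a + j) = k * a + tri (k - 1) := by
  rw [Finset.sum_congr rfl fun j hj => digitWeight_of_lt (by simp at hj; omega),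
    Finset.sum_add_distrib, Finset.sum_const, Finset.card_range, smul_eq_mul, sum_range_id_eq_tri]

lemma sum_digitWeight_wrap {i k : ℕ} (hi : i < k) (hkp : k < p) :
    ∑ j ∈ Finset.range k, digitWeight p (p - k + i + j) = tri (k - 2) + (k - 1 - i) * (p - k) := by
  have hperiod : ∑ j ∈ Finset.range k, digitWeight p (p - k + i + j) +
      ∑ j ∈ Finset.range (p - k), digitWeight p (i + j) = tri (p - 2) := by
    have hsplit : Finset.range p = Finset.range (k + (p - k)) := by rw [Nat.add_sub_of_le hkp.le]
    rw [← sum_digitWeight_period (by omega) (p - k + i), hsplit, Finset.sum_range_add]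
    congr 1
    refine Finset.sum_congr rfl fun j _ => ?_
    rw [show p - k + i + (k + j) = p + (i + j) by omega, digitWeight_add_self]
  rw [sum_digitWeight_of_add_lt (a := i) (k := p - k) (by omega), tri_sub_two_eq (by omega) hkp,
    mul_comm (p - k)] at hperiod
  have hle : i * (p - k) ≤ (k - 1) * (p - k) := Nat.mul_le_mul_right _ (by omega)
  rw [Nat.sub_mul]
  omega

end DigitWeightSums

theorem statement_8_general (p : ℕ) (hp : 3 ≤ p) (m k : ℕ) (hkp : k < p)
    (t : ℝ) :
    P p (p * m + k) t =
      (1 / (p : ℝ)) * t ^ (m * tri (p - 2) + tri (k - 1)) *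
          (∑ j ∈ Finset.range (p - k), t ^ (j * k)) * P p m t
        + (1 / (p : ℝ)) * t ^ (m * tri (p - 2) + tri (k - 2)) *
          (∑ j ∈ Finset.range k, t ^ (j * (p - k))) * P p (m + 1) t := by
  have hp0 : 0 < p := by omega
  have hnoCarry (a : ℕ) (ha : a ∈ Finset.range (p - k)) :
      t ^ (∑ j ∈ Finset.range (p * m + k), digitWeight p (a + j)) * P p ((p * m + k + a) / p) t =
        t ^ (m * tri (p - 2) + tri (k - 1)) * P p m t * t ^ (a * k) := by
    rw [Finset.mem_range] at ha
    rw [sum_digitWeight_mul_add hp0, sum_digitWeight_of_add_lt (by omega), add_assoc,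
      Nat.mul_add_div hp0, Nat.div_eq_of_lt (by omega), add_zero]
    ring
  have hcarry (i : ℕ) (hi : i ∈ Finset.range k) :
      t ^ (∑ j ∈ Finset.range (p * m + k), digitWeight p (p - k + i + j)) *
          P p ((p * m + k + (p - k + i)) / p) t =
        t ^ (m * tri (p - 2) + tri (k - 2)) * P p (m + 1) t * t ^ ((k - 1 - i) * (p - k)) := by
    rw [Finset.mem_range] at hi
    rw [sum_digitWeight_mul_add hp0, sum_digitWeight_wrap hi hkp,
      show p * m + k + (p - k + i) = p * (m + 1) + i by rw [Nat.mul_succ]; omega,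
      Nat.mul_add_div hp0, Nat.div_eq_of_lt (by omega), add_zero]
    ring
  have hsplit : Finset.range p = Finset.range (p - k + k) := by rw [Nat.sub_add_cancel hkp.le]
  rw [P_eq_sum_first_digit (by omega), hsplit, Finset.sum_range_add, Finset.sum_congr rfl hnoCarry,
    Finset.sum_congr rfl hcarry, ← Finset.mul_sum, ← Finset.mul_sum,
    Finset.sum_range_reflect (fun j => t ^ (j * (p - k))) k]
  ring

/-- for every `m ≥ 0` and `0 < k < p`,
`P_{pm+k}^p(t) = (1/p) t^{m Δ_{p-2} + Δ_{k-1}} (∑_{j=0}^{p-k-1} t^{jk}) P_m^p(t)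
 + (1/p) t^{m Δ_{p-2} + Δ_{k-2}} (∑_{j=0}^{k-1} t^{j(p-k)}) P_{m+1}^p(t)`. -/
theorem statement_8 (p : ℕ) (hp : 3 ≤ p) (m k : ℕ) (hk0 : 0 < k) (hkp : k < p)
    (t : ℝ) :
    P p (p * m + k) t =
      (1 / (p : ℝ)) * t ^ (m * tri (p - 2) + tri (k - 1)) *
          (∑ j ∈ Finset.range (p - k), t ^ (j * k)) * P p m t
        + (1 / (p : ℝ)) * t ^ (m * tri (p - 2) + tri (k - 2)) *
          (∑ j ∈ Finset.range k, t ^ (j * (p - k))) * P p (m + 1) t :=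
  statement_8_general p hp m k hkp t

end Chacon
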